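/- Regard V as a K-vector space via η, let g denote the hyperbolic form g((w₁,θ₁),(w₂,θ₂)) := θ₁(w₂) + θ₂(w₁) on V, and for t ∈ K_- := {t ∈ K : ι(t) = −t} define H_t(x,y) := −t²·g(x,y) + t·g(η_t(x), y). Let Y ⊆ U* be an F-subspace which is isotropic for Θ, i.e. θ'(θ⌟Θ) = 0 for all θ, θ' ∈ Y. Then the η(K)-span Z of {(0,θ) : θ ∈ Y} in V satisfies H_t(z, z') = 0 for all z, z' ∈ Z and all t ∈ K_-, and dim_K Z = dim_F Y. In particular, if dim_F Y = (dim_F U)/2 then each H_t admits an isotropic K-subspace of half the K-dimension of V, i.e. H_t is of split type. -/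

import Mathlib

/-!
Setup: `F` a field of characteristic zero, `q ∈ F` with `−q` not a square, `K = F(√−q)`
(generated over `F` by `s` with `s² = −q`) with nontrivial `F`-automorphism `ι`; `U` a
finite-dimensional `F`-vector space, `V := U × U*`, `V_K := K ⊗[F] V`, `σ := ι ⊗ id`;
`Θ ∈ ∧²U` nondegenerate with contraction `c : U* → U` (`ι(c θ) = θ⌟Θ`); `W ⊆ V_K` the
graph of the `K`-linear extension of `θ ↦ −s·(c θ)`, and `η : K → End_F(V)` the
`F`-algebra embedding determined by `W` (acting as `t` on `W`, as `ι(t)` on `σ(W)`, and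
preserving `V = 1 ⊗ V`); `ηbar` is its restriction to `V`, making `V` a `K`-vector space.
`g` is the hyperbolic form `g((w₁,θ₁),(w₂,θ₂)) = θ₁(w₂) + θ₂(w₁)` on `V` and, for
`t ∈ K_-`, `H_t(x,y) := −t²·g(x,y) + t·g(η_t(x), y)`.
-/

open scoped TensorProduct

/-- The `ι`-semilinear automorphism `σ := ι ⊗ id_V` of `V_K = K ⊗[F] V`. -/
noncomputable def sigmaMap (F : Type*) [Field F] (K : Type*) [Field K] [Algebra F K]
    (V : Type*) [AddCommGroup V] [Module F V] (ι : K ≃ₐ[F] K) :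
    K ⊗[F] V →ₗ[F] K ⊗[F] V :=
  TensorProduct.map ι.toLinearMap LinearMap.id

/-- The graph `W = {(−s·(θ⌟Θ)_K, θ) : θ ∈ K ⊗ U*} ⊆ V_K` of the `K`-linear extension of
`θ ↦ −s·(c θ)`, realized as the `K`-span of its values on `1 ⊗ U*`. -/
noncomputable def Wgraph (F : Type*) [Field F] (K : Type*) [Field K] [Algebra F K] (s : K)
    (U : Type*) [AddCommGroup U] [Module F U] (c : Module.Dual F U →ₗ[F] U) :
    Submodule K (K ⊗[F] (U × Module.Dual F U)) :=
  Submodule.span K (Set.range fun θ : Module.Dual F U =>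
    (-s) • ((1 : K) ⊗ₜ[F] ((c θ, 0) : U × Module.Dual F U))
      + (1 : K) ⊗ₜ[F] (((0 : U), θ) : U × Module.Dual F U))

/-- The hyperbolic symmetric bilinear form `g((w₁,θ₁),(w₂,θ₂)) := θ₁(w₂) + θ₂(w₁)` on
`V = U × U*`. -/
noncomputable def hypForm (F : Type*) [Field F] (U : Type*) [AddCommGroup U] [Module F U] :
    (U × Module.Dual F U) →ₗ[F] (U × Module.Dual F U) →ₗ[F] F :=
  LinearMap.mk₂ F (fun v w => v.2 w.1 + w.2 v.1)
    (fun v v' w => by simp; ring)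
    (fun a v w => by simp [smul_eq_mul]; ring)
    (fun v w w' => by simp; ring)
    (fun a v w => by simp [smul_eq_mul]; ring)

/-! Since `K = F(s)` with `ι s = −s`, the action `η` is determined by `η_s`, and evaluating `η_s`
on the graph `W` and its conjugate shows `η_s (0, θ) = q·(c θ, 0)`. Hence `Z = c(Y) × Y`: the
hyperbolic form vanishes on it because `Y` is `Θ`-isotropic, so both terms of `H_t` vanish, and
`dim_F Z = 2 dim_F Y` because `c` is injective. `Z` is `η`-stable since it is spanned by an
`η(K)`-orbit. -/

section QuadraticExtension

variable {F K : Type*} [Field F] [Field K] [Algebra F K] {q : F} {s : K}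

theorem exists_eq_algebraMap_add_smul (hs : s ^ 2 = algebraMap F K (-q))
    (hgen : Algebra.adjoin F ({s} : Set K) = ⊤) (t : K) :
    ∃ a b : F, t = algebraMap F K a + b • s := by
  have ht : t ∈ Algebra.adjoin F ({s} : Set K) := hgen ▸ Algebra.mem_top
  induction ht using Algebra.adjoin_induction with
  | mem x hx => exact ⟨0, 1, by simp [Set.mem_singleton_iff.1 hx]⟩
  | algebraMap a => exact ⟨a, 0, by simp⟩
  | add x y _ _ hx hy =>
    obtain ⟨a, b, rfl⟩ := hx
    obtain ⟨a', b', rfl⟩ := hy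
    exact ⟨a + a', b + b', by simp only [map_add, Algebra.smul_def]; ring⟩
  | mul x y _ _ hx hy =>
    obtain ⟨a, b, rfl⟩ := hx
    obtain ⟨a', b', rfl⟩ := hy
    refine ⟨a * a' - q * (b * b'), a * b' + a' * b, ?_⟩
    simp only [Algebra.smul_def, map_add, map_sub, map_mul]
    linear_combination algebraMap F K b * algebraMap F K b' * (hs.trans (map_neg _ q))

theorem AlgEquiv.apply_ne_self_of_ne_refl (hgen : Algebra.adjoin F ({s} : Set K) = ⊤)
    {ι : K ≃ₐ[F] K} (hι : ι ≠ AlgEquiv.refl) : ι s ≠ s := by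
  intro h
  apply hι
  have : ι.toAlgHom = AlgHom.id F K :=
    AlgHom.ext_of_adjoin_eq_top hgen fun x hx => by simp [Set.mem_singleton_iff.1 hx, h]
  ext x
  exact AlgHom.congr_fun this x

theorem AlgEquiv.apply_eq_neg_of_ne_refl (hs : s ^ 2 = algebraMap F K (-q))
    (hgen : Algebra.adjoin F ({s} : Set K) = ⊤) {ι : K ≃ₐ[F] K} (hι : ι ≠ AlgEquiv.refl) :
    ι s = -s := by
  have hsq : ι s ^ 2 = s ^ 2 := by rw [← map_pow, hs, AlgEquiv.commutes]
  have hprod : (ι s - s) * (ι s + s) = 0 := by linear_combination hsq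
  rcases mul_eq_zero.1 hprod with h | h
  · exact absurd (sub_eq_zero.1 h) (apply_ne_self_of_ne_refl hgen hι)
  · exact eq_neg_of_add_eq_zero_left h

theorem two_ne_zero_of_ne_refl (hs : s ^ 2 = algebraMap F K (-q))
    (hgen : Algebra.adjoin F ({s} : Set K) = ⊤) {ι : K ≃ₐ[F] K} (hι : ι ≠ AlgEquiv.refl) :
    (2 : K) ≠ 0 := by
  intro h2
  apply AlgEquiv.apply_ne_self_of_ne_refl hgen hι
  rw [AlgEquiv.apply_eq_neg_of_ne_refl hs hgen hι]
  linear_combination (-s) * h2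

theorem ne_zero_of_ne_refl (hs : s ^ 2 = algebraMap F K (-q))
    (hgen : Algebra.adjoin F ({s} : Set K) = ⊤) {ι : K ≃ₐ[F] K} (hι : ι ≠ AlgEquiv.refl) :
    q ≠ 0 := by
  rintro rfl
  apply AlgEquiv.apply_ne_self_of_ne_refl hgen hι
  have hs0 : s = 0 := by simpa using hs
  rw [hs0, map_zero]

end QuadraticExtension

section BaseChange

variable {F K V : Type*} [Field F] [Field K] [Algebra F K] [AddCommGroup V] [Module F V]

theorem one_tmul_injective : Function.Injective fun v : V => (1 : K) ⊗ₜ[F] v := by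
  have hK : Function.Injective (LinearMap.rTensor V (Algebra.linearMap F K)) :=
    Module.Flat.rTensor_preserves_injective_linearMap _ (algebraMap F K).injective
  convert hK.comp (TensorProduct.lid F V).symm.injective
  simp

theorem sigmaMap_smul_one_tmul (ι : K ≃ₐ[F] K) (k : K) (v : V) :
    sigmaMap F K V ι (k • (1 : K) ⊗ₜ[F] v) = ι k • (1 : K) ⊗ₜ[F] v := by
  simp [sigmaMap, TensorProduct.smul_tmul']

end BaseChange

section Graph

variable {F K U : Type*} [Field F] [Field K] [Algebra F K] [AddCommGroup U] [Module F U]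
  {q : F} {s : K}

/-- Writing `(0, θ)` as half the sum of the `W`-vector `w = (−s·cθ, θ)` and of `σ w = (s·cθ, θ)`,
on which `η_s` acts by `s` and `−s`, gives `2 η_s (0, θ) = −2 s² (cθ, 0)`. -/
theorem apply_one_tmul_zero_prod_eq (hs : s ^ 2 = algebraMap F K (-q)) (ι : K ≃ₐ[F] K)
    (hιs : ι s = -s) (h2 : (2 : K) ≠ 0) (c : Module.Dual F U →ₗ[F] U)
    (η : Module.End F (K ⊗[F] (U × Module.Dual F U)))
    (hη1 : ∀ x ∈ Wgraph F K s U c, η x = s • x)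
    (hη2 : ∀ x ∈ Wgraph F K s U c,
      η (sigmaMap F K (U × Module.Dual F U) ι x) = ι s • sigmaMap F K (U × Module.Dual F U) ι x)
    (θ : Module.Dual F U) :
    η ((1 : K) ⊗ₜ[F] ((0 : U), θ)) = (1 : K) ⊗ₜ[F] (q • (c θ, (0 : Module.Dual F U))) := by
  set a₁ : K ⊗[F] (U × Module.Dual F U) := (1 : K) ⊗ₜ[F] (c θ, (0 : Module.Dual F U))
  set a₀ : K ⊗[F] (U × Module.Dual F U) := (1 : K) ⊗ₜ[F] ((0 : U), θ)
  set w := (-s) • a₁ + a₀ with hw_def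
  have hw : w ∈ Wgraph F K s U c := Submodule.subset_span ⟨θ, rfl⟩
  have hσw : sigmaMap F K (U × Module.Dual F U) ι w = s • a₁ + a₀ := by
    have h₀ := sigmaMap_smul_one_tmul ι 1 ((0 : U), θ)
    rw [one_smul, map_one, one_smul] at h₀
    rw [hw_def, map_add, sigmaMap_smul_one_tmul, h₀, map_neg, hιs, neg_neg]
  have hqa₁ : (1 : K) ⊗ₜ[F] (q • (c θ, (0 : Module.Dual F U))) = algebraMap F K q • a₁ := by
    rw [TensorProduct.tmul_smul, algebraMap_smul]
  apply smul_right_injective _ h2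
  calc (2 : K) • η a₀ = η w + η (sigmaMap F K (U × Module.Dual F U) ι w) := by
        rw [hσw, ← map_add, two_smul, ← map_add, hw_def]; congr 1; module
    _ = s • w + (-s) • (s • a₁ + a₀) := by rw [hη1 w hw, hη2 w hw, hσw, hιs]
    _ = (2 : K) • (1 : K) ⊗ₜ[F] (q • (c θ, (0 : Module.Dual F U))) := by
        rw [hqa₁, hw_def, smul_smul]
        have hs' : s ^ 2 = -algebraMap F K q := by rw [hs, map_neg]
        match_scalars
        · linear_combination (-2 : K) * hs'
        · ring

end Graph

theorem Submodule.map_span_orbit_le {R A X : Type*} [CommSemiring R] [Semiring A] [Algebra R A]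
    {M : Type*} [AddCommMonoid M] [Module R M] (ρ : A →ₐ[R] Module.End R M) (f : X → M)
    (P : Set X) (u : A) :
    (span R {v | ∃ t : A, ∃ x ∈ P, v = ρ t (f x)}).map (ρ u)
      ≤ span R {v | ∃ t : A, ∃ x ∈ P, v = ρ t (f x)} := by
  rw [Submodule.map_span_le]
  rintro _ ⟨t, x, hx, rfl⟩
  exact subset_span ⟨u * t, x, hx, by rw [map_mul, Module.End.mul_apply]⟩

section Prod

variable {F K M N : Type*} [Field F] [Field K] [Algebra F K] [AddCommGroup M] [Module F M]
  [AddCommGroup N] [Module F N]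

theorem span_orbit_zero_prod_eq_map_prod {q : F} {s : K} (hs : s ^ 2 = algebraMap F K (-q))
    (hgen : Algebra.adjoin F ({s} : Set K) = ⊤) (hq : q ≠ 0) (c : N →ₗ[F] M)
    (ρ : K →ₐ[F] Module.End F (M × N)) (hρs : ∀ θ, ρ s ((0 : M), θ) = q • (c θ, (0 : N)))
    (Y : Submodule F N) :
    Submodule.span F {v | ∃ t : K, ∃ θ ∈ Y, v = ρ t ((0 : M), θ)} = (Y.map c).prod Y := by
  have hsnd : ∀ θ ∈ Y, ((0 : M), θ) ∈ (Y.map c).prod Y := fun θ hθ => ⟨zero_mem _, hθ⟩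
  have hfst : ∀ θ ∈ Y, (c θ, (0 : N)) ∈ (Y.map c).prod Y :=
    fun θ hθ => ⟨Submodule.mem_map_of_mem hθ, zero_mem _⟩
  apply le_antisymm
  · rw [Submodule.span_le]
    rintro _ ⟨t, θ, hθ, rfl⟩
    obtain ⟨a, b, rfl⟩ := exists_eq_algebraMap_add_smul hs hgen t
    rw [map_add, AlgHom.commutes, map_smul, LinearMap.add_apply, Module.algebraMap_end_apply,
      LinearMap.smul_apply, hρs]
    exact add_mem (Submodule.smul_mem _ a (hsnd θ hθ))
      (Submodule.smul_mem _ b (Submodule.smul_mem _ q (hfst θ hθ)))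
  · rintro ⟨_, θ⟩ ⟨⟨θ', hθ', rfl⟩, hθ⟩
    have hdecomp : ((c θ', θ) : M × N) = q⁻¹ • ρ s ((0 : M), θ') + ρ 1 ((0 : M), θ) := by
      rw [hρs, map_one, Module.End.one_apply, smul_smul, inv_mul_cancel₀ hq, one_smul,
        Prod.mk_add_mk, add_zero, zero_add]
    rw [hdecomp]
    exact add_mem (Submodule.smul_mem _ _ (Submodule.subset_span ⟨s, θ', hθ', rfl⟩))
      (Submodule.subset_span ⟨1, θ, hθ, rfl⟩)

theorem Submodule.finrank_map_prod_self (c : N →ₗ[F] M) (hc : Function.Injective c)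
    (Y : Submodule F N) [FiniteDimensional F Y] :
    Module.finrank F ((Y.map c).prod Y) = 2 * Module.finrank F Y := by
  have hrange : (Y.map c).prod Y = LinearMap.range ((c ∘ₗ Y.subtype).prodMap Y.subtype) := by
    rw [LinearMap.range_prodMap, LinearMap.range_comp, Submodule.range_subtype]
  have hinj : Function.Injective ((c ∘ₗ Y.subtype).prodMap Y.subtype) := by
    rw [LinearMap.coe_prodMap]
    exact (hc.comp Y.injective_subtype).prodMap Y.injective_subtype
  rw [hrange, LinearMap.finrank_range_of_inj hinj, Module.finrank_prod, two_mul]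

end Prod

theorem hypForm_eq_zero_of_mem_map_prod {F U : Type*} [Field F] [AddCommGroup U] [Module F U]
    (c : Module.Dual F U →ₗ[F] U) (Y : Submodule F (Module.Dual F U))
    (hY : ∀ θ ∈ Y, ∀ θ' ∈ Y, θ' (c θ) = 0) {z z' : U × Module.Dual F U}
    (hz : z ∈ (Y.map c).prod Y) (hz' : z' ∈ (Y.map c).prod Y) : hypForm F U z z' = 0 := by
  obtain ⟨⟨θ₁, hθ₁, hz₁⟩, hθ₂⟩ := hz
  obtain ⟨⟨θ₁', hθ₁', hz₁'⟩, hθ₂'⟩ := hz'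
  simp [hypForm, ← hz₁, ← hz₁', hY θ₁ hθ₁ _ hθ₂', hY θ₁' hθ₁' _ hθ₂]

theorem stmt18_general (F : Type*) [Field F] (q : F)
    (K : Type*) [Field K] [Algebra F K] (s : K) (hs : s ^ 2 = algebraMap F K (-q))
    (hgen : Algebra.adjoin F ({s} : Set K) = ⊤)
    (ι : K ≃ₐ[F] K) (hι : ι ≠ AlgEquiv.refl)
    (U : Type*) [AddCommGroup U] [Module F U] [FiniteDimensional F U]
    (c : Module.Dual F U →ₗ[F] U)
    (hcnd : Function.Bijective c)
    (η : K → Module.End F (K ⊗[F] (U × Module.Dual F U)))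
    (hη1 : ∀ t : K, ∀ x ∈ Wgraph F K s U c, η t x = t • x)
    (hη2 : ∀ t : K, ∀ x ∈ Wgraph F K s U c,
      η t (sigmaMap F K (U × Module.Dual F U) ι x)
        = ι t • sigmaMap F K (U × Module.Dual F U) ι x)
    (ηbar : K →ₐ[F] Module.End F (U × Module.Dual F U))
    (hlink : ∀ (t : K) (v : U × Module.Dual F U),
      η t ((1 : K) ⊗ₜ[F] v) = (1 : K) ⊗ₜ[F] (ηbar t v))
    (Y : Submodule F (Module.Dual F U))
    (hY : ∀ θ ∈ Y, ∀ θ' ∈ Y, θ' (c θ) = 0) :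
    let Z : Submodule F (U × Module.Dual F U) :=
      Submodule.span F {v | ∃ t : K, ∃ θ ∈ Y, v = ηbar t ((0 : U), θ)}
    (∀ t : K, ι t = -t → ∀ z ∈ Z, ∀ z' ∈ Z,
      -(t ^ 2) * algebraMap F K (hypForm F U z z')
        + t * algebraMap F K (hypForm F U (ηbar t z) z') = 0)
    ∧ (∀ t : K, Z.map (ηbar t) ≤ Z)
    ∧ Module.finrank F Z = 2 * Module.finrank F Y
    ∧ (2 * Module.finrank F Y = Module.finrank F U →
        2 * Module.finrank F Z = Module.finrank F (U × Module.Dual F U)) := by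
  intro Z
  have hρs : ∀ θ, ηbar s ((0 : U), θ) = q • (c θ, (0 : Module.Dual F U)) := fun θ =>
    one_tmul_injective (F := F) (K := K) <| by
      beta_reduce
      rw [← hlink, apply_one_tmul_zero_prod_eq hs ι (AlgEquiv.apply_eq_neg_of_ne_refl hs hgen hι)
        (two_ne_zero_of_ne_refl hs hgen hι) c (η s) (hη1 s) (hη2 s) θ]
  have hZ : Z = (Y.map c).prod Y :=
    span_orbit_zero_prod_eq_map_prod hs hgen (ne_zero_of_ne_refl hs hgen hι) c ηbar hρs Y
  have hstab : ∀ t, Z.map (ηbar t) ≤ Z :=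
    Submodule.map_span_orbit_le ηbar (fun θ => ((0 : U), θ)) Y
  have hrank : Module.finrank F Z = 2 * Module.finrank F Y :=
    hZ ▸ Submodule.finrank_map_prod_self c hcnd.1 Y
  refine ⟨fun t _ z hz z' hz' => ?_, hstab, hrank, fun hY2 => ?_⟩
  · have htz : ηbar t z ∈ Z := hstab t (Submodule.mem_map_of_mem hz)
    rw [hZ] at hz hz' htz
    rw [hypForm_eq_zero_of_mem_map_prod c Y hY hz hz',
      hypForm_eq_zero_of_mem_map_prod c Y hY htz hz', map_zero, mul_zero, mul_zero, add_zero]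
  · rw [hrank, Module.finrank_prod, Subspace.dual_finrank_eq]
    omega

/-- let `Y ⊆ U*` be an `F`-subspace isotropic for `Θ` and `Z ⊆ V` the
`η(K)`-span of `{(0,θ) : θ ∈ Y}`.  Then `Z` is `H_t`-isotropic for every `t ∈ K_-`, `Z` is
an `η(K)`-subspace, and `dim_K Z = dim_F Y` (equivalently `dim_F Z = 2·dim_F Y`); in
particular if `dim_F Y = (dim_F U)/2` then `Z` is an isotropic `K`-subspace of half the
`K`-dimension of `V`, i.e. each `H_t` is of split type. -/
theorem stmt18 (F : Type*) [Field F] [CharZero F] (q : F) (hq : ∀ x : F, x ^ 2 ≠ -q)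
    (K : Type*) [Field K] [Algebra F K] (s : K) (hs : s ^ 2 = algebraMap F K (-q))
    (hgen : Algebra.adjoin F ({s} : Set K) = ⊤)
    (ι : K ≃ₐ[F] K) (hι : ι ≠ AlgEquiv.refl)
    (U : Type*) [AddCommGroup U] [Module F U] [FiniteDimensional F U]
    (Θ : ExteriorAlgebra F U)
    (hΘ : Θ ∈ (LinearMap.range (ExteriorAlgebra.ι F : U →ₗ[F] ExteriorAlgebra F U)) ^ 2)
    (c : Module.Dual F U →ₗ[F] U)
    (hc : ∀ θ : Module.Dual F U,
      ExteriorAlgebra.ι F (c θ) =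
        CliffordAlgebra.contractLeft (Q := (0 : QuadraticForm F U)) θ Θ)
    (hcnd : Function.Bijective c)
    (η : K → Module.End F (K ⊗[F] (U × Module.Dual F U)))
    (hη1 : ∀ t : K, ∀ x ∈ Wgraph F K s U c, η t x = t • x)
    (hη2 : ∀ t : K, ∀ x ∈ Wgraph F K s U c,
      η t (sigmaMap F K (U × Module.Dual F U) ι x)
        = ι t • sigmaMap F K (U × Module.Dual F U) ι x)
    (ηbar : K →ₐ[F] Module.End F (U × Module.Dual F U))
    (hlink : ∀ (t : K) (v : U × Module.Dual F U),
      η t ((1 : K) ⊗ₜ[F] v) = (1 : K) ⊗ₜ[F] (ηbar t v))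
    (Y : Submodule F (Module.Dual F U))
    (hY : ∀ θ ∈ Y, ∀ θ' ∈ Y, θ' (c θ) = 0) :
    let Z : Submodule F (U × Module.Dual F U) :=
      Submodule.span F {v | ∃ t : K, ∃ θ ∈ Y, v = ηbar t ((0 : U), θ)}
    (∀ t : K, ι t = -t → ∀ z ∈ Z, ∀ z' ∈ Z,
      -(t ^ 2) * algebraMap F K (hypForm F U z z')
        + t * algebraMap F K (hypForm F U (ηbar t z) z') = 0)
    ∧ (∀ t : K, Z.map (ηbar t) ≤ Z)
    ∧ Module.finrank F Z = 2 * Module.finrank F Y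
    ∧ (2 * Module.finrank F Y = Module.finrank F U →
        2 * Module.finrank F Z = Module.finrank F (U × Module.Dual F U)) :=
  stmt18_general F q K s hs hgen ι hι U c hcnd η hη1 hη2 ηbar hlink Y hY
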